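/- arXiv:1901.07821 — 2 statements merged into one kernel-verified Lean document; each statement's English description precedes it below -/
import Mathlib

section
/- Suppose the function k(z) = E_{X∼p_X}[Δ(X,z)] does not attain its minimum at every point of the support of p_X. Then R(·,0) ≠ R(·,∞): there exists a distortion level D0 with R(D0,0) > R(D0,∞). Concretely, at D* = min_{p_{X̂}} E_{X̂∼p_{X̂}} [k(X̂)], any distribution p_{X̂} independent of X achieving distortion D* must be supported in S = argmin_z k(z), so it cannot equal p_X; hence zero rate with perfect perceptual quality is impossible at distortion D*. -/
open scoped BigOperators ENNReal

/-- A probability mass function on a finite alphabet. -/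
def IsPMF {𝓧 : Type*} [Fintype 𝓧] (p : 𝓧 → ℝ) : Prop :=
  (∀ x, 0 ≤ p x) ∧ ∑ x, p x = 1

/-- A conditional distribution (channel/kernel) on a finite alphabet. -/
def IsKernel {𝓧 : Type*} [Fintype 𝓧] (K : 𝓧 → 𝓧 → ℝ) : Prop :=
  ∀ x, IsPMF (K x)

/-- Output (marginal) distribution of the reconstruction `X̂`. -/
def outDist {𝓧 : Type*} [Fintype 𝓧] (p : 𝓧 → ℝ) (K : 𝓧 → 𝓧 → ℝ) : 𝓧 → ℝ :=
  fun y => ∑ x, p x * K x y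

/-- Expected distortion `E[Δ(X, X̂)]`. -/
def expDistortion {𝓧 : Type*} [Fintype 𝓧] (p : 𝓧 → ℝ) (Δ : 𝓧 → 𝓧 → ℝ)
    (K : 𝓧 → 𝓧 → ℝ) : ℝ :=
  ∑ x, ∑ y, p x * K x y * Δ x y

/-- Mutual information `I(X; X̂)` (natural log). -/
noncomputable def mutualInfo {𝓧 : Type*} [Fintype 𝓧] (p : 𝓧 → ℝ) (K : 𝓧 → 𝓧 → ℝ) : ℝ :=
  ∑ x, ∑ y, p x * K x y * Real.log (K x y / outDist p K y)

/-- The rate-distortion-perception function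
`R(D,P) = min { I(X;X̂) : E[Δ(X,X̂)] ≤ D, d(p_X, p_X̂) ≤ P }`,
with the convention that the minimum over an empty set is `+∞`. -/
noncomputable def RDP {𝓧 : Type*} [Fintype 𝓧] (p : 𝓧 → ℝ) (Δ : 𝓧 → 𝓧 → ℝ)
    (d : (𝓧 → ℝ) → (𝓧 → ℝ) → ℝ) (D P : ℝ) : ℝ≥0∞ :=
  sInf { r : ℝ≥0∞ | ∃ K : 𝓧 → 𝓧 → ℝ, IsKernel K ∧ expDistortion p Δ K ≤ D ∧
    d p (outDist p K) ≤ P ∧ r = ENNReal.ofReal (mutualInfo p K) }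

/-- The rate-distortion function without perception constraint, `R(D, ∞)`. -/
noncomputable def RDPinf {𝓧 : Type*} [Fintype 𝓧] (p : 𝓧 → ℝ) (Δ : 𝓧 → 𝓧 → ℝ)
    (D : ℝ) : ℝ≥0∞ :=
  sInf { r : ℝ≥0∞ | ∃ K : 𝓧 → 𝓧 → ℝ, IsKernel K ∧ expDistortion p Δ K ≤ D ∧
    r = ENNReal.ofReal (mutualInfo p K) }

/-!
Let `k z = ∑ₓ p x Δ(x, z)` and `Dmin = min k`, attained at `z'`. Reconstructing every `x` as `z'`
has distortion `Dmin` and zero rate, so `R(Dmin, ∞) = 0`. A channel `K` with perfect perception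
has output law `p`; if it also has distortion `≤ Dmin`, it must stay away from the independent
channel `K x = p`, whose distortion is `E[k(X)] > Dmin`. By Cauchy–Schwarz the distortion gap
`ε = E[k(X)] - Dmin` satisfies `ε² ≤ C · ∑ₓ p x ‖K x - p‖²` with `C = ∑ p x Δ(x,y)²`, and the
Pinsker-type bound `a log (a/b) ≥ (a - b) + (a - b)²/2` on `[0,1]` gives
`∑ₓ p x ‖K x - p‖² ≤ 2 I(X; X̂)`. Hence `R(Dmin, 0) ≥ ε² / (2C) > 0`.
-/

open Real Finset

lemma convexOn_mul_log_sub_sq_div_two :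
    ConvexOn ℝ (Set.Icc 0 1) (fun t : ℝ => t * log t - t ^ 2 / 2) := by
  refine convexOn_of_hasDerivWithinAt2_nonneg (f' := fun t => log t + 1 - t)
    (f'' := fun t => t⁻¹ - 1) (convex_Icc 0 1) ?_ ?_ ?_ ?_
  · exact (continuous_mul_log.sub (by fun_prop)).continuousOn
  · rw [interior_Icc]
    intro t ht
    have := (hasDerivAt_mul_log ht.1.ne').sub ((hasDerivAt_pow 2 t).div_const 2)
    exact (this.congr_deriv (by ring)).hasDerivWithinAt
  · rw [interior_Icc]
    intro t ht
    exact (((hasDerivAt_log ht.1.ne').add_const 1).sub (hasDerivAt_id t)).hasDerivWithinAt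
  · rw [interior_Icc]
    intro t ht
    simp only [sub_nonneg]
    exact one_le_inv₀ ht.1 |>.2 ht.2.le

lemma sub_add_sq_div_two_le_mul_log_div {a b : ℝ} (ha : a ∈ Set.Icc 0 1) (hb : b ∈ Set.Icc 0 1)
    (hab : b = 0 → a = 0) : a - b + (a - b) ^ 2 / 2 ≤ a * log (a / b) := by
  rcases hb.1.eq_or_lt with rfl | hb0
  · simp [hab rfl]
  have hψ : HasDerivAt (fun t => t * log t - t ^ 2 / 2) (log b + 1 - b) b := by
    have := (hasDerivAt_mul_log hb0.ne').sub ((hasDerivAt_pow 2 b).div_const 2)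
    exact this.congr_deriv (by ring)
  have tangent : b * log b - b ^ 2 / 2 + (log b + 1 - b) * (a - b) ≤ a * log a - a ^ 2 / 2 := by
    rcases lt_trichotomy a b with h | rfl | h
    · have := convexOn_mul_log_sub_sq_div_two.slope_le_of_hasDerivAt ha hb h hψ
      rw [slope_def_field, div_le_iff₀ (sub_pos.2 h)] at this
      linarith
    · simp
    · have := convexOn_mul_log_sub_sq_div_two.le_slope_of_hasDerivAt hb ha h hψ
      rw [slope_def_field, le_div_iff₀ (sub_pos.2 h)] at this
      linarith
  have hlog : a * log (a / b) = a * log a - a * log b := by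
    rcases ha.1.eq_or_lt with rfl | ha0
    · simp
    · rw [log_div ha0.ne' hb0.ne']; ring
  rw [hlog]
  nlinarith

section
variable {𝓧 : Type*} [Fintype 𝓧]

lemma IsPMF.le_one {p : 𝓧 → ℝ} (hp : IsPMF p) (x : 𝓧) : p x ≤ 1 :=
  hp.2 ▸ single_le_sum (fun i _ => hp.1 i) (mem_univ x)

lemma isPMF_outDist {p : 𝓧 → ℝ} {K : 𝓧 → 𝓧 → ℝ} (hp : IsPMF p) (hK : IsKernel K) :
    IsPMF (outDist p K) := by
  refine ⟨fun y => sum_nonneg fun x _ => mul_nonneg (hp.1 x) ((hK x).1 y), ?_⟩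
  simp only [outDist]
  rw [sum_comm]
  simp only [← mul_sum, (hK _).2, mul_one, hp.2]

/-- Squared deviation of the rows of `K` from `p`, weighted by `p`; it vanishes iff `X̂` is
independent of `X` with law `p` (on the support of `p`). -/
def rowSqDev (p : 𝓧 → ℝ) (K : 𝓧 → 𝓧 → ℝ) : ℝ :=
  ∑ x, ∑ y, p x * (K x y - p y) ^ 2

lemma rowSqDev_nonneg {p : 𝓧 → ℝ} (hp : ∀ x, 0 ≤ p x) (K : 𝓧 → 𝓧 → ℝ) : 0 ≤ rowSqDev p K :=
  sum_nonneg fun x _ => sum_nonneg fun _ _ => mul_nonneg (hp x) (sq_nonneg _)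

lemma rowSqDev_div_two_le_mutualInfo {p : 𝓧 → ℝ} {K : 𝓧 → 𝓧 → ℝ} (hp : IsPMF p)
    (hK : IsKernel K) (hout : outDist p K = p) : rowSqDev p K / 2 ≤ mutualInfo p K := by
  have hsupp : ∀ x y, 0 < p x → p y = 0 → K x y = 0 := by
    intro x y hx hy
    have hsum : ∑ x', p x' * K x' y = 0 := by simpa [outDist, hy] using congrFun hout y
    have := (sum_eq_zero_iff_of_nonneg fun i _ => mul_nonneg (hp.1 i) ((hK i).1 y)).1 hsum x
      (mem_univ x)
    exact (mul_eq_zero.1 this).resolve_left hx.ne'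
  have hterm : ∀ x y, p x * (K x y - p y + (K x y - p y) ^ 2 / 2)
      ≤ p x * K x y * log (K x y / p y) := by
    intro x y
    rcases (hp.1 x).eq_or_lt with hx | hx
    · simp [← hx]
    rw [mul_assoc]
    exact mul_le_mul_of_nonneg_left (sub_add_sq_div_two_le_mul_log_div
      ⟨(hK x).1 y, (hK x).le_one y⟩ ⟨hp.1 y, hp.le_one y⟩ (hsupp x y hx)) hx.le
  have hrow : ∀ x, ∑ y, p x * (K x y - p y) = 0 := by
    intro x
    rw [← mul_sum, sum_sub_distrib, (hK x).2, hp.2, sub_self, mul_zero]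
  calc rowSqDev p K / 2
      = ∑ x, ∑ y, p x * (K x y - p y + (K x y - p y) ^ 2 / 2) := by
        simp only [rowSqDev, sum_div, mul_add, sum_add_distrib, hrow, zero_add]
        refine sum_congr rfl fun x _ => sum_congr rfl fun y _ => by ring
    _ ≤ ∑ x, ∑ y, p x * K x y * log (K x y / p y) :=
        sum_le_sum fun x _ => sum_le_sum fun y _ => hterm x y
    _ = mutualInfo p K := by rw [mutualInfo, hout]

lemma mutualInfo_const {p q : 𝓧 → ℝ} (hp : ∑ x, p x = 1) : mutualInfo p (fun _ => q) = 0 := by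
  have hout : outDist p (fun _ => q) = q := by
    ext y
    simp [outDist, ← sum_mul, hp]
  refine sum_eq_zero fun x _ => sum_eq_zero fun y _ => ?_
  rw [hout]
  by_cases hy : q y = 0 <;> simp [hy]

def pointKernel [DecidableEq 𝓧] (z : 𝓧) : 𝓧 → 𝓧 → ℝ :=
  fun _ y => if y = z then 1 else 0

lemma isKernel_pointKernel [DecidableEq 𝓧] (z : 𝓧) : IsKernel (pointKernel z) :=
  fun _ => ⟨fun _ => ite_nonneg zero_le_one le_rfl, by simp [pointKernel]⟩

lemma expDistortion_pointKernel [DecidableEq 𝓧] (p : 𝓧 → ℝ) (Δ : 𝓧 → 𝓧 → ℝ) (z : 𝓧) :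
    expDistortion p Δ (pointKernel z) = ∑ x, p x * Δ x z := by
  simp [expDistortion, pointKernel]

lemma RDPinf_eq_zero {p : 𝓧 → ℝ} (hp : IsPMF p) (Δ : 𝓧 → 𝓧 → ℝ) (z : 𝓧) :
    RDPinf p Δ (∑ x, p x * Δ x z) = 0 := by
  classical
  refine nonpos_iff_eq_zero.1 (sInf_le ⟨pointKernel z, isKernel_pointKernel z,
    (expDistortion_pointKernel p Δ z).le, ?_⟩)
  unfold pointKernel
  rw [mutualInfo_const hp.2, ENNReal.ofReal_zero]

lemma sq_expDistortion_sub_le {p : 𝓧 → ℝ} (hp : ∀ x, 0 ≤ p x) (Δ K : 𝓧 → 𝓧 → ℝ) :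
    (expDistortion p Δ (fun _ => p) - expDistortion p Δ K) ^ 2
      ≤ (∑ x, ∑ y, p x * Δ x y ^ 2) * rowSqDev p K := by
  have hcs := sum_sq_le_sum_mul_sum_of_sq_le_mul (univ : Finset (𝓧 × 𝓧))
    (r := fun i => p i.1 * (p i.2 - K i.1 i.2) * Δ i.1 i.2)
    (f := fun i => p i.1 * Δ i.1 i.2 ^ 2) (g := fun i => p i.1 * (K i.1 i.2 - p i.2) ^ 2)
    (fun i _ => mul_nonneg (hp _) (sq_nonneg _)) (fun i _ => mul_nonneg (hp _) (sq_nonneg _))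
    (fun i _ => le_of_eq (by ring))
  have hgap : expDistortion p Δ (fun _ => p) - expDistortion p Δ K
      = ∑ x, ∑ y, p x * (p y - K x y) * Δ x y := by
    simp only [expDistortion, ← sum_sub_distrib]
    exact sum_congr rfl fun x _ => sum_congr rfl fun y _ => by ring
  simp only [Fintype.sum_prod_type] at hcs
  rw [hgap]
  exact hcs

lemma lt_expDistortion_const {p : 𝓧 → ℝ} (hp : IsPMF p) {Δ : 𝓧 → 𝓧 → ℝ} {m : ℝ} {z₀ : 𝓧}
    (hmin : ∀ z, m ≤ ∑ x, p x * Δ x z) (hz₀ : 0 < p z₀) (hgap : m < ∑ x, p x * Δ x z₀) :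
    m < expDistortion p Δ (fun _ => p) := by
  calc m = ∑ y, p y * m := by rw [← sum_mul, hp.2, one_mul]
    _ < ∑ y, p y * ∑ x, p x * Δ x y :=
        sum_lt_sum (fun y _ => mul_le_mul_of_nonneg_left (hmin y) (hp.1 y))
          ⟨z₀, mem_univ _, mul_lt_mul_of_pos_left hgap hz₀⟩
    _ = expDistortion p Δ (fun _ => p) := by
        rw [expDistortion, sum_comm]
        exact sum_congr rfl fun y _ => by rw [mul_sum]; exact sum_congr rfl fun x _ => by ring

end

theorem rdp_perfect_perception_strictly_above_general {𝓧 : Type*} [Fintype 𝓧]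
    (p : 𝓧 → ℝ) (hp : IsPMF p)
    (Δ : 𝓧 → 𝓧 → ℝ)
    (d : (𝓧 → ℝ) → (𝓧 → ℝ) → ℝ)
    (hdnn : ∀ q : 𝓧 → ℝ, IsPMF q → 0 ≤ d p q)
    (hd0 : ∀ q : 𝓧 → ℝ, IsPMF q → (d p q = 0 ↔ p = q))
    (hA2 : ∃ z, 0 < p z ∧ ∃ w, (∑ x, p x * Δ x w) < (∑ x, p x * Δ x z)) :
    ∃ D₀ : ℝ, RDPinf p Δ D₀ < RDP p Δ d D₀ 0 := by
  classical
  obtain ⟨z₀, hz₀, w, hw⟩ := hA2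
  obtain ⟨z', -, hz'⟩ := exists_min_image univ (fun z => ∑ x, p x * Δ x z) ⟨z₀, mem_univ z₀⟩
  set Dmin := ∑ x, p x * Δ x z'
  set ε := expDistortion p Δ (fun _ => p) - Dmin
  set C := ∑ x, ∑ y, p x * Δ x y ^ 2
  have hε : 0 < ε := sub_pos.2 <| lt_expDistortion_const hp (fun z => hz' z (mem_univ z)) hz₀
    ((hz' w (mem_univ w)).trans_lt hw)
  have hsq : ∀ K, expDistortion p Δ K ≤ Dmin → ε ^ 2 ≤ C * rowSqDev p K := fun K hK =>
    (pow_le_pow_left₀ hε.le (by linarith) 2).trans (sq_expDistortion_sub_le hp.1 Δ K)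
  have hC : 0 < C := by
    -- `hsq` applies to the point mass at the minimiser `z'`, and `ε > 0`
    have := hsq _ (expDistortion_pointKernel p Δ z').le
    nlinarith [rowSqDev_nonneg hp.1 (pointKernel z')]
  refine ⟨Dmin, ?_⟩
  rw [RDPinf_eq_zero hp Δ z']
  refine (ENNReal.ofReal_pos.2 (by positivity : 0 < ε ^ 2 / (2 * C))).trans_le (le_sInf ?_)
  rintro _ ⟨K, hK, hKD, hperc, rfl⟩
  have hout : outDist p K = p := by
    have hq := isPMF_outDist hp hK
    exact ((hd0 _ hq).1 (le_antisymm hperc (hdnn _ hq))).symm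
  refine ENNReal.ofReal_le_ofReal ((div_le_iff₀ (by positivity)).2 ?_)
  nlinarith [hsq K hKD, rowSqDev_div_two_le_mutualInfo hp hK hout]

/-- if k(z) = E[Δ(X,z)] does not attain its minimum at every point of the
support of p_X, then R(·,0) ≠ R(·,∞): there is a distortion level D₀ with
R(D₀,0) > R(D₀,∞). -/
theorem rdp_perfect_perception_strictly_above {𝓧 : Type*} [Fintype 𝓧] [Nonempty 𝓧]
    (p : 𝓧 → ℝ) (hp : IsPMF p)
    (Δ : 𝓧 → 𝓧 → ℝ) (hΔnn : ∀ x y, 0 ≤ Δ x y) (hΔ0 : ∀ x y, Δ x y = 0 ↔ x = y)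
    (d : (𝓧 → ℝ) → (𝓧 → ℝ) → ℝ)
    (hdnn : ∀ q : 𝓧 → ℝ, IsPMF q → 0 ≤ d p q)
    (hd0 : ∀ q : 𝓧 → ℝ, IsPMF q → (d p q = 0 ↔ p = q))
    (hA2 : ∃ z, 0 < p z ∧ ∃ w, (∑ x, p x * Δ x w) < (∑ x, p x * Δ x z)) :
    ∃ D₀ : ℝ, RDPinf p Δ D₀ < RDP p Δ d D₀ 0 :=
  rdp_perfect_perception_strictly_above_general p hp Δ d hdnn hd0 hA2
end

section
/- For X ~ Bern(p), p ≤ 1/2, Hamming distortion and TV-divergence perception constraint with P ≤ p, the rate-distortion-perception function in the region D1 < D ≤ D2 (with D1 = P/(1+2P−2p), D2 = 2p(1−p)+(2p−1)P) equals R(D,P) = 2H_b(p) + H_b(p−P) − H_t((D−P)/2, p) − H_t((D+P)/2, 1−p), where H_t(p1,p2) is the entropy of a ternary distribution (p1, p2, 1−p1−p2). -/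
open scoped BigOperators ENNReal

/-- The Bernoulli(p) pmf on Bool: `P(X = true) = p`. -/
def bern (p : ℝ) : Bool → ℝ := fun b => if b then p else 1 - p

/-- Hamming distortion on Bool. -/
def hamming : Bool → Bool → ℝ := fun x y => if x = y then 0 else 1

/-- Total variation distance between two pmfs on a finite alphabet. -/
noncomputable def dTV {𝓧 : Type*} [Fintype 𝓧] (p q : 𝓧 → ℝ) : ℝ := (1 / 2) * ∑ z, |p z - q z|

/-- Binary entropy (natural log). -/
noncomputable def Hb (x : ℝ) : ℝ := -(x * Real.log x) - (1 - x) * Real.log (1 - x)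

/-- Ternary entropy of the distribution (p₁, p₂, 1 − p₁ − p₂) (natural log). -/
noncomputable def Ht (p₁ p₂ : ℝ) : ℝ :=
  -(p₁ * Real.log p₁) - p₂ * Real.log p₂ - (1 - p₁ - p₂) * Real.log (1 - p₁ - p₂)



/-!
Achievability: the channel `rdpKernel` whose joint law with `X` puts mass `(D - P)/2` on
`(0, 1)` and `(D + P)/2` on `(1, 0)` meets both constraints with equality, and evaluating
`I(X; X̂) = H(X) + H(X̂) - H(X, X̂)` at it gives the formula.

Converse: for any channel `K` and any positive channel `K'` with output law `q'`, Gibbs'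
inequality gives `I(p, K) ≥ ∑ p K log (K' / q')`, with equality at `K = K'`. Taking `K'` the
optimal channel, the right-hand side is affine in the two crossover probabilities of `K`, and
`D₁ < D ≤ D₂` says exactly that its Lagrange multipliers for the distortion and the perception
constraint are nonnegative, so it is minimised at the optimal channel.
-/

open Real

section MutualInfo

variable {𝓧 : Type*} [Fintype 𝓧]

theorem mul_le_outDist {p : 𝓧 → ℝ} {K : 𝓧 → 𝓧 → ℝ} (hp : ∀ x, 0 ≤ p x)
    (hK : ∀ x y, 0 ≤ K x y) (x y : 𝓧) : p x * K x y ≤ outDist p K y :=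
  Finset.single_le_sum (f := fun x => p x * K x y) (fun x _ => mul_nonneg (hp x) (hK x y))
    (Finset.mem_univ x)

theorem sum_outDist {p : 𝓧 → ℝ} {K : 𝓧 → 𝓧 → ℝ} (hp : ∑ x, p x = 1)
    (hK : ∀ x, ∑ y, K x y = 1) : ∑ y, outDist p K y = 1 := by
  simp only [outDist]
  rw [Finset.sum_comm]
  simp [← Finset.mul_sum, hK, hp]

theorem mul_mul_log_div_eq {a k q : ℝ} (ha : 0 ≤ a) (hk : 0 ≤ k) (hq : a * k ≤ q) :
    a * k * log (k / q) = k * negMulLog a - negMulLog (a * k) - a * k * log q := by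
  rcases ha.eq_or_lt with rfl | ha
  · simp
  rcases hk.eq_or_lt with rfl | hk
  · simp
  have hq : 0 < q := (mul_pos ha hk).trans_le hq
  rw [log_div hk.ne' hq.ne', negMulLog_mul]
  unfold negMulLog
  ring

theorem mutualInfo_eq_sum_negMulLog {p : 𝓧 → ℝ} {K : 𝓧 → 𝓧 → ℝ} (hp : ∀ x, 0 ≤ p x)
    (hK : IsKernel K) :
    mutualInfo p K = ∑ x, negMulLog (p x) + ∑ y, negMulLog (outDist p K y)
      - ∑ x, ∑ y, negMulLog (p x * K x y) := by
  have hterm (x y : 𝓧) := mul_mul_log_div_eq (hp x) ((hK x).1 y)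
    (mul_le_outDist hp (fun x => (hK x).1) x y)
  have hX : ∑ x, ∑ y, K x y * negMulLog (p x) = ∑ x, negMulLog (p x) := by
    simp [← Finset.sum_mul, (hK _).2]
  have hY : ∑ x, ∑ y, p x * K x y * log (outDist p K y) =
      -∑ y, negMulLog (outDist p K y) := by
    rw [Finset.sum_comm]
    simp [← Finset.sum_mul, negMulLog, outDist]
  simp only [mutualInfo, hterm, Finset.sum_sub_distrib, hX, hY]
  ring

theorem sub_mul_div_le_mul_log_div_sub_log_div {a k k' s t : ℝ} (ha : 0 ≤ a) (hk : 0 ≤ k)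
    (hk' : 0 < k') (ht : 0 < t) (hs : a * k ≤ s) :
    a * k - a * k' * (s / t) ≤ a * k * (log (k / s) - log (k' / t)) := by
  rcases (mul_nonneg ha hk).eq_or_lt with h | h
  · rw [← h, zero_mul, zero_sub, neg_nonpos]
    exact mul_nonneg (mul_nonneg ha hk'.le) (div_nonneg (h ▸ hs) ht.le)
  have hs : 0 < s := h.trans_le hs
  have hk : 0 < k := pos_of_mul_pos_right h ha
  calc a * k - a * k' * (s / t) = -(a * k * (k' * s / (k * t) - 1)) := by field_simp; ring
    _ ≤ -(a * k * log (k' * s / (k * t))) :=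
      neg_le_neg (mul_le_mul_of_nonneg_left (log_le_sub_one_of_pos (by positivity)) h.le)
    _ = a * k * (log (k / s) - log (k' / t)) := by
      rw [log_div (by positivity) (by positivity), log_mul hk'.ne' hs.ne',
        log_mul hk.ne' ht.ne', log_div hk.ne' hs.ne', log_div hk'.ne' ht.ne']
      ring

theorem sum_mul_log_div_outDist_le_mutualInfo {p : 𝓧 → ℝ} {K K' : 𝓧 → 𝓧 → ℝ}
    (hp : ∀ x, 0 ≤ p x) (hK : ∀ x y, 0 ≤ K x y) (hK' : ∀ x y, 0 < K' x y)
    (hq' : ∀ y, 0 < outDist p K' y) :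
    ∑ x, ∑ y, p x * K x y * log (K' x y / outDist p K' y) ≤ mutualInfo p K := by
  have hzero :
      ∑ x, ∑ y, (p x * K x y - p x * K' x y * (outDist p K y / outDist p K' y)) = 0 := by
    rw [Finset.sum_comm]
    refine Finset.sum_eq_zero fun y _ => ?_
    rw [Finset.sum_sub_distrib, ← Finset.sum_mul]
    change outDist p K y - outDist p K' y * _ = 0
    rw [mul_div_cancel₀ _ (hq' y).ne', sub_self]
  rw [← sub_nonneg, mutualInfo, ← Finset.sum_sub_distrib, ← hzero]
  refine Finset.sum_le_sum fun x _ => ?_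
  rw [← Finset.sum_sub_distrib]
  refine Finset.sum_le_sum fun y _ => ?_
  rw [← mul_sub]
  exact sub_mul_div_le_mul_log_div_sub_log_div (hp x) (hK x y) (hK' x y) (hq' y)
    (mul_le_outDist hp hK x y)

end MutualInfo

theorem log_add_log_le_log_add_log {a b c d : ℝ} (ha : 0 < a) (hb : 0 < b)
    (h : a * b ≤ c * d) : log a + log b ≤ log c + log d := by
  have hcd : 0 < c * d := (mul_pos ha hb).trans_le h
  rw [← log_mul ha.ne' hb.ne',
    ← log_mul (left_ne_zero_of_mul hcd.ne') (right_ne_zero_of_mul hcd.ne')]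
  exact log_le_log (mul_pos ha hb) h

theorem Hb_eq_negMulLog (x : ℝ) : Hb x = negMulLog x + negMulLog (1 - x) := by
  simp only [Hb, negMulLog]
  ring

theorem Ht_eq_negMulLog (p₁ p₂ : ℝ) :
    Ht p₁ p₂ = negMulLog p₁ + negMulLog p₂ + negMulLog (1 - p₁ - p₂) := by
  simp only [Ht, negMulLog]
  ring

theorem dTV_bool {p q : Bool → ℝ} (hp : ∑ b, p b = 1) (hq : ∑ b, q b = 1) :
    dTV p q = |p true - q true| := by
  rw [Fintype.sum_bool] at hp hq
  rw [dTV, Fintype.sum_bool, show p false - q false = -(p true - q true) by linarith, abs_neg]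
  ring

theorem expDistortion_bern_hamming (p : ℝ) (K : Bool → Bool → ℝ) :
    expDistortion (bern p) hamming K = (1 - p) * K false true + p * K true false := by
  simp [expDistortion, bern, hamming]
  ring

theorem outDist_bern_true (p : ℝ) (K : Bool → Bool → ℝ) :
    outDist (bern p) K true = (1 - p) * K false true + p * K true true := by
  simp [outDist, bern]
  ring

/-- With `s = (1 - p) K false true` and `t = p K true false`, the sum is affine in `(s, t)`,
the distortion is `s + t` and `p - outDist true` is `t - s`; `hcD` and `hcP` say that the
multipliers of these two constraints are nonnegative. -/
theorem sum_bern_mul_le_of_expDistortion_le {p : ℝ} {K K' : Bool → Bool → ℝ}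
    (c : Bool → Bool → ℝ) (hK : ∀ x, ∑ y, K x y = 1) (hK' : ∀ x, ∑ y, K' x y = 1)
    (hcD : c false true - c false false + (c true false - c true true) ≤ 0)
    (hcP : c true false - c true true ≤ c false true - c false false)
    (hD : expDistortion (bern p) hamming K' ≤ expDistortion (bern p) hamming K)
    (hq : outDist (bern p) K true ≤ outDist (bern p) K' true) :
    ∑ x, ∑ y, bern p x * K x y * c x y ≤ ∑ x, ∑ y, bern p x * K' x y * c x y := by
  have hrow {K : Bool → Bool → ℝ} (hK : ∀ x, ∑ y, K x y = 1) :
      K false false = 1 - K false true ∧ K true true = 1 - K true false := by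
    constructor <;>
      linarith [Fintype.sum_bool (K false), Fintype.sum_bool (K true), hK false, hK true]
  obtain ⟨hK₀, hK₁⟩ := hrow hK
  obtain ⟨hK'₀, hK'₁⟩ := hrow hK'
  rw [expDistortion_bern_hamming, expDistortion_bern_hamming] at hD
  rw [outDist_bern_true, outDist_bern_true, hK₁, hK'₁] at hq
  simp only [Fintype.sum_bool, bern, if_true, Bool.false_eq_true, if_false, hK₀, hK₁, hK'₀, hK'₁]
  linarith [mul_nonneg (neg_nonneg.2 hcD) (sub_nonneg.2 hD),
    mul_nonneg (sub_nonneg.2 hcP) (sub_nonneg.2 hq)]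

noncomputable def rdpKernel (p P D : ℝ) : Bool → Bool → ℝ := fun x y =>
  if x then (if y then 1 - (D + P) / (2 * p) else (D + P) / (2 * p))
  else (if y then (D - P) / (2 * (1 - p)) else 1 - (D - P) / (2 * (1 - p)))

section rdpKernel

variable {p P D : ℝ}

theorem sum_rdpKernel (x : Bool) : ∑ y, rdpKernel p P D x y = 1 := by
  cases x <;> simp [rdpKernel]

theorem bern_mul_rdpKernel (hp : 0 < p) (h1p : p < 1) (x y : Bool) :
    bern p x * rdpKernel p P D x y =
      if x then (if y then p - (D + P) / 2 else (D + P) / 2)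
      else (if y then (D - P) / 2 else 1 - p - (D - P) / 2) := by
  have : 1 - p ≠ 0 := by linarith
  cases x <;> cases y <;> simp [bern, rdpKernel] <;> field_simp

theorem rdpKernel_pos (hp : 0 < p) (h1p : p < 1) (hP0 : 0 ≤ P) (hPp : P < p) (hPD : P < D)
    (hD2 : D ≤ 2 * p * (1 - p) + (2 * p - 1) * P) (x y : Bool) : 0 < rdpKernel p P D x y := by
  have h : 0 < bern p x * rdpKernel p P D x y := by
    rw [bern_mul_rdpKernel hp h1p]
    cases x <;> cases y <;> simp <;> nlinarith
  exact pos_of_mul_pos_right h (by cases x <;> simp [bern] <;> linarith)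

theorem isKernel_rdpKernel (hp : 0 < p) (h1p : p < 1) (hP0 : 0 ≤ P) (hPp : P < p)
    (hPD : P < D) (hD2 : D ≤ 2 * p * (1 - p) + (2 * p - 1) * P) :
    IsKernel (rdpKernel p P D) := fun x =>
  ⟨fun y => (rdpKernel_pos hp h1p hP0 hPp hPD hD2 x y).le, sum_rdpKernel x⟩

theorem outDist_rdpKernel (hp : 0 < p) (h1p : p < 1) :
    outDist (bern p) (rdpKernel p P D) true = p - P ∧
      outDist (bern p) (rdpKernel p P D) false = 1 - p + P := by
  simp only [outDist, Fintype.sum_bool, bern_mul_rdpKernel hp h1p]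
  constructor <;> simp <;> ring

theorem expDistortion_rdpKernel (hp : 0 < p) (h1p : p < 1) :
    expDistortion (bern p) hamming (rdpKernel p P D) = D := by
  simp only [expDistortion, Fintype.sum_bool, bern_mul_rdpKernel hp h1p]
  simp [hamming]
  ring

theorem dTV_rdpKernel (hp : 0 < p) (h1p : p < 1) (hP0 : 0 ≤ P) :
    dTV (bern p) (outDist (bern p) (rdpKernel p P D)) = P := by
  rw [dTV_bool, (outDist_rdpKernel hp h1p).1]
  · simp [bern, abs_of_nonneg hP0]
  · simp [bern]
  · exact sum_outDist (by simp [bern]) sum_rdpKernel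

theorem mutualInfo_rdpKernel (hp : 0 < p) (h1p : p < 1) (hP0 : 0 ≤ P) (hPp : P < p)
    (hPD : P < D) (hD2 : D ≤ 2 * p * (1 - p) + (2 * p - 1) * P) :
    mutualInfo (bern p) (rdpKernel p P D) =
      2 * Hb p + Hb (p - P) - Ht ((D - P) / 2) p - Ht ((D + P) / 2) (1 - p) := by
  rw [mutualInfo_eq_sum_negMulLog (fun x => by cases x <;> simp [bern] <;> linarith)
    (isKernel_rdpKernel hp h1p hP0 hPp hPD hD2)]
  simp only [Fintype.sum_bool, bern_mul_rdpKernel hp h1p, (outDist_rdpKernel hp h1p).1,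
    (outDist_rdpKernel hp h1p).2, Hb_eq_negMulLog, Ht_eq_negMulLog]
  simp only [bern, if_true, Bool.false_eq_true, if_false]
  rw [show 1 - (p - P) = 1 - p + P by ring, show 1 - (D - P) / 2 - p = 1 - p - (D - P) / 2 by ring,
    show 1 - (D + P) / 2 - (1 - p) = p - (D + P) / 2 by ring]
  ring

theorem rdpKernel_multipliers_nonneg (hp : 0 < p) (h1p : p < 1) (hP0 : 0 ≤ P) (hPp : P < p)
    (hPD : P < D) (hD2 : D ≤ 2 * p * (1 - p) + (2 * p - 1) * P)
    (hD1 : P ≤ D * (1 + 2 * P - 2 * p)) :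
    let c x y := log (rdpKernel p P D x y / outDist (bern p) (rdpKernel p P D) y)
    c false true - c false false + (c true false - c true true) ≤ 0 ∧
      c true false - c true true ≤ c false true - c false false := by
  intro c
  have hK := rdpKernel_pos hp h1p hP0 hPp hPD hD2
  have hJ (x y : Bool) := bern_mul_rdpKernel (P := P) (D := D) hp h1p x y
  have j00 : (1 - p) * rdpKernel p P D false false = 1 - p - (D - P) / 2 := by
    simpa [bern] using hJ false false
  have j01 : (1 - p) * rdpKernel p P D false true = (D - P) / 2 := by
    simpa [bern] using hJ false true
  have j10 : p * rdpKernel p P D true false = (D + P) / 2 := by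
    simpa [bern] using hJ true false
  have j11 : p * rdpKernel p P D true true = p - (D + P) / 2 := by
    simpa [bern] using hJ true true
  obtain ⟨hq₁, hq₀⟩ := outDist_rdpKernel (P := P) (D := D) hp h1p
  have hq₁0 : 0 < p - P := by linarith
  have hq₀0 : 0 < 1 - p + P := by linarith
  have hc (x y : Bool) :
      c x y = log (rdpKernel p P D x y) - log (outDist (bern p) (rdpKernel p P D) y) :=
    log_div (hK x y).ne' (by cases y <;> simp only [hq₁, hq₀] <;> linarith)
  simp only [hc, hq₁, hq₀]
  set K := rdpKernel p P D
  have hpq : 0 < p * (1 - p) := by nlinarith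
  constructor
  · have key : K false true * K true false ≤ K false false * K true true := by
      refine le_of_mul_le_mul_left ?_ hpq
      calc p * (1 - p) * (K false true * K true false)
          = (1 - p) * K false true * (p * K true false) := by ring
        _ = (D - P) / 2 * ((D + P) / 2) := by rw [j01, j10]
        _ ≤ (1 - p - (D - P) / 2) * (p - (D + P) / 2) := by nlinarith
        _ = p * (1 - p) * (K false false * K true true) := by rw [← j00, ← j11]; ring
    linarith [log_add_log_le_log_add_log (hK _ _) (hK _ _) key]
  · have key : K true false * (p - P) * (K false false * (p - P)) ≤
        K false true * (1 - p + P) * (K true true * (1 - p + P)) := by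
      refine le_of_mul_le_mul_left ?_ hpq
      calc p * (1 - p) * (K true false * (p - P) * (K false false * (p - P)))
          = p * K true false * ((1 - p) * K false false) * (p - P) ^ 2 := by ring
        _ = (D + P) / 2 * (1 - p - (D - P) / 2) * (p - P) ^ 2 := by rw [j10, j00]
        -- the difference of the two sides is `(D (1 + 2P - 2p) - P) (D₂ - D) / 4`
        _ ≤ (D - P) / 2 * (p - (D + P) / 2) * (1 - p + P) ^ 2 := by
          nlinarith [mul_nonneg (sub_nonneg.2 hD1) (sub_nonneg.2 hD2)]
        _ = p * (1 - p) * (K false true * (1 - p + P) * (K true true * (1 - p + P))) := by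
          rw [← j01, ← j11]; ring
    have := log_add_log_le_log_add_log (mul_pos (hK _ _) hq₁0) (mul_pos (hK _ _) hq₁0) key
    rw [log_mul (hK _ _).ne' hq₁0.ne', log_mul (hK _ _).ne' hq₁0.ne',
      log_mul (hK _ _).ne' hq₀0.ne', log_mul (hK _ _).ne' hq₀0.ne'] at this
    linarith

end rdpKernel

theorem middle_region_bounds {p P D : ℝ} (hp2 : p ≤ 1 / 2) (hP0 : 0 ≤ P) (hPp : P ≤ p)
    (hD1 : P / (1 + 2 * P - 2 * p) < D) (hD2 : D ≤ 2 * p * (1 - p) + (2 * p - 1) * P) :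
    P < p ∧ P < D ∧ P ≤ D * (1 + 2 * P - 2 * p) := by
  rcases (show 0 ≤ 1 + 2 * P - 2 * p by linarith).eq_or_lt with hm | hm
  · -- the corner `p = 1/2`, `P = 0`, where `D₁ = 0 / 0` is read as `0`
    have hP : P = 0 := by linarith
    rw [← hm, div_zero] at hD1
    exact ⟨by linarith, by linarith, by rw [← hm, hP, mul_zero]⟩
  · have hD1 := (div_lt_iff₀ hm).1 hD1
    refine ⟨?_, by nlinarith, hD1.le⟩
    by_contra! hpP
    obtain rfl : P = p := le_antisymm hPp hpP
    nlinarith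

/-- STATEMENT 11: for X ~ Bern(p), p ≤ 1/2, Hamming distortion and TV perception constraint
with P ≤ p, in the region D₁ < D ≤ D₂ (D₁ = P/(1+2P−2p), D₂ = 2p(1−p)+(2p−1)P):
R(D,P) = 2H_b(p) + H_b(p−P) − H_t((D−P)/2, p) − H_t((D+P)/2, 1−p). -/
theorem bernoulli_rdp_middle_region (p Pc D : ℝ) (hp : 0 < p) (hp2 : p ≤ 1 / 2)
    (hP0 : 0 ≤ Pc) (hPp : Pc ≤ p)
    (hD1 : Pc / (1 + 2 * Pc - 2 * p) < D)
    (hD2 : D ≤ 2 * p * (1 - p) + (2 * p - 1) * Pc) :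
    RDP (bern p) hamming dTV D Pc =
      ENNReal.ofReal
        (2 * Hb p + Hb (p - Pc) - Ht ((D - Pc) / 2) p - Ht ((D + Pc) / 2) (1 - p)) := by
  obtain ⟨hPp, hPD, hD1⟩ := middle_region_bounds hp2 hP0 hPp hD1 hD2
  have h1p : p < 1 := by linarith
  have hbern : IsPMF (bern p) :=
    ⟨fun x => by cases x <;> simp [bern] <;> linarith, by simp [bern]⟩
  rw [← mutualInfo_rdpKernel hp h1p hP0 hPp hPD hD2]
  refine le_antisymm (sInf_le ⟨rdpKernel p Pc D, isKernel_rdpKernel hp h1p hP0 hPp hPD hD2,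
    (expDistortion_rdpKernel hp h1p).le, (dTV_rdpKernel hp h1p hP0).le, rfl⟩) (le_sInf ?_)
  rintro _ ⟨K, hK, hdist, hperc, rfl⟩
  have hq : outDist (bern p) (rdpKernel p Pc D) true ≤ outDist (bern p) K true := by
    rw [dTV_bool hbern.2 (sum_outDist hbern.2 fun x => (hK x).2)] at hperc
    simp only [bern, if_true] at hperc
    linarith [(outDist_rdpKernel (P := Pc) (D := D) hp h1p).1,
      le_abs_self (p - outDist (bern p) K true)]
  have hq' (y : Bool) : 0 < outDist (bern p) (rdpKernel p Pc D) y := by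
    cases y <;> simp only [outDist_rdpKernel hp h1p] <;> linarith
  obtain ⟨hcD, hcP⟩ := rdpKernel_multipliers_nonneg hp h1p hP0 hPp hPD hD2 hD1
  refine ENNReal.ofReal_le_ofReal ((sum_bern_mul_le_of_expDistortion_le _ sum_rdpKernel
    (fun x => (hK x).2) hcD hcP ?_ hq).trans (sum_mul_log_div_outDist_le_mutualInfo hbern.1
      (fun x => (hK x).1) (rdpKernel_pos hp h1p hP0 hPp hPD hD2) hq'))
  rwa [expDistortion_rdpKernel hp h1p]
end
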